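/- Let m ∈ {0,…,N−1}, k ∈ {0,…,C−1}, and let τ = k₀·Δt for some integer k₀, with k·T_SC ≤ τ < k·T_SC + min{T_SC − t_{m,1}, t_{m,1}}, and set ν = 2·c̃₁·τ − k/Δt. Then for every i ∈ {0,…,C−k−1} and every t ∈ [t_{m,i} + τ, t_{m,i+k+1}), as well as for every t ∈ [t_{m,C−k} + τ, T), the ambiguity-function integrand is the constant φ_m(t)·conj(φ_m(t−τ))·exp(−2πiνt) = exp(2πi·((m/T)·τ − c̃₁·τ²)), independent of t and i; hence the contributions of all frequency-aligned sub-intervals add coherently, producing a pulse of the auto-ambiguity function at the point (τ, 2·c̃₁·τ − k/Δt). -/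

import Mathlib

open MeasureTheory Complex Real

noncomputable section

namespace AFDM

variable (N C : ℕ) (Δt : ℝ)

/-- Frame duration `T = N·Δt`. -/
def T : ℝ := N * Δt

/-- Chirp rate parameter `c̃₁ = C/(2·T·Δt)`. -/
def ctil : ℝ := C / (2 * T N Δt * Δt)

/-- Subchirp duration `T_SC = T/C`. -/
def TSC : ℝ := T N Δt / C

/-- Spectrum wrapping points `t_{m,q}`: `t_{m,0} = 0`, `t_{m,q} = q·T/C − m·Δt/C` for
`q = 1,…,C`, and `t_{m,C+1} = T`. -/
def tp (m q : ℕ) : ℝ :=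
  if q = 0 then 0 else if q ≤ C then q * T N Δt / C - m * Δt / C else T N Δt

/-- Wrapping index function `q_m(t)`: equals `q` on `[t_{m,q}, t_{m,q+1})` for `t ∈ [0,T)`. -/
def qm (m : ℕ) (t : ℝ) : ℤ :=
  (((Finset.range (C + 1)).filter (fun q => tp N C Δt m q ≤ t)).card : ℤ) - 1

/-- The `m`-th continuous-time AFDM chirp subcarrier with parameter `c₂`:
`φ_m(t) = exp(2πi(c₂·m² + c̃₁·t² + (m/T)·t − q_m(t)·t/Δt))` on `[0,T)`, `0` otherwise. -/
def phi (c₂ : ℝ) (m : ℕ) (t : ℝ) : ℂ :=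
  if 0 ≤ t ∧ t < T N Δt then
    Complex.exp (2 * Real.pi * Complex.I *
      ((c₂ * (m : ℝ) ^ 2 + ctil N C Δt * t ^ 2 + ((m : ℝ) / T N Δt) * t
        - (qm N C Δt m t : ℝ) * t / Δt : ℝ) : ℂ))
  else 0

/-- The aperiodic ambiguity function `A_{a,b}(τ,ν) = ∫ a(t)·conj(b(t−τ))·exp(−2πiνt) dt`. -/
def AF (a b : ℝ → ℂ) (τ ν : ℝ) : ℂ :=
  ∫ t : ℝ, a t * (starRingEnd ℂ) (b (t - τ)) *
    Complex.exp (-(2 * Real.pi * Complex.I * ((ν * t : ℝ) : ℂ)))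

/-- The integral indicator `I(c, t₁, t₂)`. -/
def Iind (c t₁ t₂ : ℝ) : ℂ :=
  if c ≠ 0 then
    (Complex.exp (2 * Real.pi * Complex.I * ((c * t₂ : ℝ) : ℂ))
      - Complex.exp (2 * Real.pi * Complex.I * ((c * t₁ : ℝ) : ℂ))) /
      (2 * Real.pi * Complex.I * ((c : ℝ) : ℂ))
  else ((t₂ - t₁ : ℝ) : ℂ)


/-! On `[t_{m,j}, t_{m,j+1})` the wrapping index is `j`. Apart from the two end points, the
wrapping points are spaced exactly `T_SC` apart, so for `τ ≥ k·T_SC` every `t` in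
`[t_{m,j} + τ, t_{m,j+k+1})` lies in the `(j+k)`-th interval while `t − τ` lies in the `j`-th.
With wrapping indices differing by `k`, the phase of `φ_m(t)·conj(φ_m(t − τ))` is affine in `t`
with slope `2·c̃₁·τ − k/Δt = ν`, and its constant term is `(m/T)·τ − c̃₁·τ²` up to the
integer `j·k₀`. -/

section WrappingPoints

variable {N C : ℕ} {Δt : ℝ} {m : ℕ}

lemma tp_zero : tp N C Δt m 0 = 0 := if_pos rfl

lemma tp_of_one_le_of_le {q : ℕ} (h1 : 1 ≤ q) (h2 : q ≤ C) :
    tp N C Δt m q = (q * N - m) * (Δt / C) := by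
  rw [tp, if_neg (by omega), if_pos h2, T]
  ring

lemma tp_of_lt {q : ℕ} (h : C < q) : tp N C Δt m q = T N Δt := by
  rw [tp, if_neg (by omega), if_neg (by omega)]

lemma tp_monotone (hm : m ≤ N) (hΔt : 0 ≤ Δt) : Monotone (tp N C Δt m) := by
  have hmN : (m : ℝ) ≤ N := by exact_mod_cast hm
  have hd : 0 ≤ Δt / C := by positivity
  have hT : 0 ≤ T N Δt := by unfold T; positivity
  refine monotone_nat_of_le_succ fun q => ?_
  rcases Nat.eq_zero_or_pos q with rfl | hq
  · rcases Nat.lt_or_ge C 1 with hC | hC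
    · rw [tp_zero, tp_of_lt hC]; exact hT
    · rw [tp_zero, tp_of_one_le_of_le le_rfl hC]; push_cast; nlinarith
  rcases Nat.lt_or_ge q C with hqC | hqC
  · rw [tp_of_one_le_of_le hq hqC.le, tp_of_one_le_of_le (by omega) hqC]; push_cast; nlinarith
  rw [tp_of_lt (by omega : C < q + 1)]
  rcases hqC.eq_or_lt with rfl | hqC
  · have hC : (C : ℝ) ≠ 0 := by positivity
    rw [tp_of_one_le_of_le hq le_rfl, T]
    field_simp
    nlinarith
  · rw [tp_of_lt hqC]

lemma tp_nonneg (hmono : Monotone (tp N C Δt m)) (q : ℕ) : 0 ≤ tp N C Δt m q :=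
  tp_zero.symm.trans_le (hmono q.zero_le)

lemma tp_le_T (hmono : Monotone (tp N C Δt m)) (q : ℕ) : tp N C Δt m q ≤ T N Δt :=
  (hmono (le_max_left q (C + 1))).trans_eq (tp_of_lt (by omega))

/-- Away from `t_{m,0} = 0` and `t_{m,C+1} = T` the wrapping points lie on the grid `q·T_SC`
shifted by `−m·Δt/C`, and the two end points lie above that shifted grid. -/
lemma tp_sub_mul_TSC_antitone (hC : 0 < C) (hm : m ≤ N) (hΔt : 0 ≤ Δt) :
    Antitone fun q : ℕ => tp N C Δt m q - q * TSC N C Δt := by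
  have hmN : (m : ℝ) ≤ N := by exact_mod_cast hm
  have hC' : (C : ℝ) ≠ 0 := by positivity
  have hd : 0 ≤ Δt / C := by positivity
  have hT : T N Δt = C * TSC N C Δt := by rw [TSC]; field_simp
  have hTSC : TSC N C Δt = N * (Δt / C) := by rw [TSC, T]; ring
  have hTSC0 : 0 ≤ TSC N C Δt := hTSC ▸ by positivity
  refine antitone_nat_of_succ_le fun q => ?_
  rcases Nat.eq_zero_or_pos q with rfl | hq
  · rw [tp_zero, tp_of_one_le_of_le le_rfl hC, hTSC]; push_cast; nlinarith
  rcases Nat.lt_or_ge q C with hqC | hqC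
  · rw [tp_of_one_le_of_le hq hqC.le, tp_of_one_le_of_le (by omega) hqC, hTSC]
    push_cast
    linarith
  rw [tp_of_lt (by omega : C < q + 1), hT]
  rcases hqC.eq_or_lt with rfl | hqC
  · rw [tp_of_one_le_of_le hq le_rfl, hTSC]; push_cast; nlinarith
  · rw [tp_of_lt hqC, hT]; push_cast; nlinarith

lemma tp_add_le (hC : 0 < C) (hm : m ≤ N) (hΔt : 0 ≤ Δt) (i k : ℕ) :
    tp N C Δt m (i + k) ≤ tp N C Δt m i + k * TSC N C Δt := by
  have := tp_sub_mul_TSC_antitone hC hm hΔt (Nat.le_add_right i k)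
  push_cast at this
  linarith

lemma qm_eq_of_mem_Ico (hmono : Monotone (tp N C Δt m)) {j : ℕ} (hj : j ≤ C) {t : ℝ}
    (h1 : tp N C Δt m j ≤ t) (h2 : t < tp N C Δt m (j + 1)) : qm N C Δt m t = j := by
  have hfilter : (Finset.range (C + 1)).filter (fun q => tp N C Δt m q ≤ t) =
      Finset.range (j + 1) := by
    ext q
    simp only [Finset.mem_filter, Finset.mem_range]
    constructor
    · rintro ⟨-, hq⟩
      by_contra! hjq
      exact (h2.trans_le (hmono hjq)).not_ge hq
    · intro hq
      exact ⟨by omega, (hmono (Nat.lt_succ_iff.mp hq)).trans h1⟩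
  rw [qm, hfilter, Finset.card_range]
  push_cast
  ring

lemma qm_eq_of_mem_shifted_window (hC : 0 < C) (hm : m ≤ N) (hΔt : 0 ≤ Δt) {j k : ℕ}
    (hjk : j + k ≤ C) {τ t : ℝ} (hτ : k * TSC N C Δt ≤ τ)
    (h1 : tp N C Δt m j + τ ≤ t) (h2 : t < tp N C Δt m (j + k + 1)) :
    qm N C Δt m t = j + k ∧ qm N C Δt m (t - τ) = j := by
  have hmono := tp_monotone (C := C) hm hΔt
  have hlow := tp_add_le hC hm hΔt j k
  have hhigh := tp_add_le hC hm hΔt (j + 1) k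
  rw [add_right_comm] at hhigh
  constructor
  · exact_mod_cast qm_eq_of_mem_Ico hmono hjk (by linarith) h2
  · exact qm_eq_of_mem_Ico hmono (by omega) (by linarith) (by linarith)

end WrappingPoints

lemma exp_mul_conj_exp_mul_exp_neg {x y z w : ℝ} (n : ℤ) (h : x - y - z = w + n) :
    Complex.exp (2 * π * I * x) * starRingEnd ℂ (Complex.exp (2 * π * I * y)) *
        Complex.exp (-(2 * π * I * z)) =
      Complex.exp (2 * π * I * w) := by
  have hconj : starRingEnd ℂ (Complex.exp (2 * π * I * y)) = Complex.exp (-(2 * π * I * y)) := by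
    rw [← Complex.exp_conj]
    congr 1
    simp only [map_mul, map_ofNat, conj_I, conj_ofReal]
    ring
  have hc : (x : ℂ) - y - z = w + n := by exact_mod_cast h
  rw [hconj, ← Complex.exp_add, ← Complex.exp_add,
    show 2 * π * I * x + -(2 * π * I * y) + -(2 * π * I * z) = 2 * π * I * w + n * (2 * π * I) by
      linear_combination (2 * π * I) * hc,
    Complex.exp_add, Complex.exp_int_mul_two_pi_mul_I, mul_one]

/-- The quadratic phases cancel against `ν·t`; of the wrapping terms only
`q_m(t − τ)·τ/Δt = q_m(t − τ)·k₀ ∈ ℤ` survives. -/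
lemma phi_mul_conj_phi_sub_mul_exp {N C : ℕ} {Δt : ℝ} (hΔt : Δt ≠ 0) (c₂ : ℝ) {m k : ℕ}
    {k₀ : ℤ} {τ t : ℝ} (hτ : τ = k₀ * Δt) (ht : t ∈ Set.Ico 0 (T N Δt))
    (htτ : t - τ ∈ Set.Ico 0 (T N Δt)) (hq : qm N C Δt m t = qm N C Δt m (t - τ) + k) :
    phi N C Δt c₂ m t * starRingEnd ℂ (phi N C Δt c₂ m (t - τ)) *
        Complex.exp (-(2 * π * I * (((2 * ctil N C Δt * τ - k / Δt) * t : ℝ) : ℂ))) =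
      Complex.exp (2 * π * I * ((((m : ℝ) / T N Δt) * τ - ctil N C Δt * τ ^ 2 : ℝ) : ℂ)) := by
  rw [phi, phi, if_pos (show _ ∧ _ from ht), if_pos (show _ ∧ _ from htτ)]
  refine exp_mul_conj_exp_mul_exp_neg (-(qm N C Δt m (t - τ) * k₀)) ?_
  rw [hq, hτ]
  push_cast
  field_simp
  ring

lemma phi_mul_conj_phi_sub_mul_exp_of_mem_window {N C : ℕ} {Δt : ℝ} (hC : 0 < C) {m k : ℕ}
    (hm : m ≤ N) (hΔt : 0 < Δt) {c₂ : ℝ} {k₀ : ℤ} {τ : ℝ} (hτ : τ = k₀ * Δt)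
    (hτk : k * TSC N C Δt ≤ τ) {j : ℕ} (hj : j + k ≤ C) {t : ℝ}
    (h1 : tp N C Δt m j + τ ≤ t) (h2 : t < tp N C Δt m (j + k + 1)) :
    phi N C Δt c₂ m t * starRingEnd ℂ (phi N C Δt c₂ m (t - τ)) *
        Complex.exp (-(2 * π * I * (((2 * ctil N C Δt * τ - k / Δt) * t : ℝ) : ℂ))) =
      Complex.exp (2 * π * I * ((((m : ℝ) / T N Δt) * τ - ctil N C Δt * τ ^ 2 : ℝ) : ℂ)) := by
  have hmono := tp_monotone (C := C) hm hΔt.le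
  have hτ0 : 0 ≤ τ := le_trans (by rw [TSC, T]; positivity) hτk
  obtain ⟨hqt, hqtτ⟩ := qm_eq_of_mem_shifted_window hC hm hΔt.le hj hτk h1 h2
  have htT : t < T N Δt := h2.trans_le (tp_le_T hmono _)
  have htτ0 : 0 ≤ t - τ := by linarith [tp_nonneg hmono j]
  exact phi_mul_conj_phi_sub_mul_exp hΔt.ne' c₂ hτ ⟨by linarith, htT⟩ ⟨htτ0, by linarith⟩
    (by rw [hqt, hqtτ])

theorem aligned_integrand_constant_general
    (N C : ℕ) (hC : 0 < C)
    (Δt : ℝ) (hΔt : 0 < Δt) (c₂ : ℝ) (m k : ℕ) (hm : m < N) (hk : k < C)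
    (k₀ : ℤ) (τ : ℝ) (hτ : τ = (k₀ : ℝ) * Δt)
    (hτ1 : (k : ℝ) * TSC N C Δt ≤ τ)
    (ν : ℝ) (hν : ν = 2 * ctil N C Δt * τ - (k : ℝ) / Δt) :
    (∀ i : ℕ, i ≤ C - k - 1 → ∀ t : ℝ,
        tp N C Δt m i + τ ≤ t → t < tp N C Δt m (i + k + 1) →
        phi N C Δt c₂ m t * (starRingEnd ℂ) (phi N C Δt c₂ m (t - τ)) *
            Complex.exp (-(2 * Real.pi * Complex.I * ((ν * t : ℝ) : ℂ))) =
          Complex.exp (2 * Real.pi * Complex.I *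
            ((((m : ℝ) / T N Δt) * τ - ctil N C Δt * τ ^ 2 : ℝ) : ℂ))) ∧
      (∀ t : ℝ, tp N C Δt m (C - k) + τ ≤ t → t < T N Δt →
        phi N C Δt c₂ m t * (starRingEnd ℂ) (phi N C Δt c₂ m (t - τ)) *
            Complex.exp (-(2 * Real.pi * Complex.I * ((ν * t : ℝ) : ℂ))) =
          Complex.exp (2 * Real.pi * Complex.I *
            ((((m : ℝ) / T N Δt) * τ - ctil N C Δt * τ ^ 2 : ℝ) : ℂ))) := by
  subst hν
  refine ⟨fun i hi t h1 h2 => ?_, fun t h1 h2 => ?_⟩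
  · exact phi_mul_conj_phi_sub_mul_exp_of_mem_window hC hm.le hΔt hτ hτ1 (by omega) h1 h2
  · refine phi_mul_conj_phi_sub_mul_exp_of_mem_window hC hm.le hΔt hτ hτ1 (j := C - k)
      (by omega) h1 ?_
    rwa [show C - k + k + 1 = C + 1 by omega, tp_of_lt (Nat.lt_succ_self C)]

/-- Coherent accumulation on frequency-aligned sub-intervals: when `τ = k₀·Δt` lies in the
`k`-th subchirp window and `ν = 2·c̃₁·τ − k/Δt`, the ambiguity-function integrand is the
constant `exp(2πi·((m/T)·τ − c̃₁·τ²))` on every frequency-aligned sub-interval, hence all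
such contributions add coherently, producing a pulse of the auto-ambiguity function at
`(τ, 2·c̃₁·τ − k/Δt)`. -/
theorem aligned_integrand_constant
    (N C : ℕ) (hN : 0 < N) (hNeven : Even N) (hC : 0 < C)
    (Δt : ℝ) (hΔt : 0 < Δt) (c₂ : ℝ) (m k : ℕ) (hm : m < N) (hk : k < C)
    (k₀ : ℤ) (τ : ℝ) (hτ : τ = (k₀ : ℝ) * Δt)
    (hτ1 : (k : ℝ) * TSC N C Δt ≤ τ)
    (hτ2 : τ < (k : ℝ) * TSC N C Δt + min (TSC N C Δt - tp N C Δt m 1) (tp N C Δt m 1))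
    (ν : ℝ) (hν : ν = 2 * ctil N C Δt * τ - (k : ℝ) / Δt) :
    (∀ i : ℕ, i ≤ C - k - 1 → ∀ t : ℝ,
        tp N C Δt m i + τ ≤ t → t < tp N C Δt m (i + k + 1) →
        phi N C Δt c₂ m t * (starRingEnd ℂ) (phi N C Δt c₂ m (t - τ)) *
            Complex.exp (-(2 * Real.pi * Complex.I * ((ν * t : ℝ) : ℂ))) =
          Complex.exp (2 * Real.pi * Complex.I *
            ((((m : ℝ) / T N Δt) * τ - ctil N C Δt * τ ^ 2 : ℝ) : ℂ))) ∧
      (∀ t : ℝ, tp N C Δt m (C - k) + τ ≤ t → t < T N Δt →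
        phi N C Δt c₂ m t * (starRingEnd ℂ) (phi N C Δt c₂ m (t - τ)) *
            Complex.exp (-(2 * Real.pi * Complex.I * ((ν * t : ℝ) : ℂ))) =
          Complex.exp (2 * Real.pi * Complex.I *
            ((((m : ℝ) / T N Δt) * τ - ctil N C Δt * τ ^ 2 : ℝ) : ℂ))) :=
  aligned_integrand_constant_general N C hC Δt hΔt c₂ m k hm hk k₀ τ hτ hτ1 ν hν

end AFDM
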